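/- Let σ ⊂ ℝ^d be the simplex with vertices 0, 2e_1, e_2, ..., e_d, where e_i is the i-th standard unit vector. Then every lattice point of Int C(σ) ∩ ℤ^{d+1} can be written as (1,...,1,d) + w for some w ∈ M(σ); i.e., M*(σ) = (1,...,1,d) + M(σ). Consequently rdeg x = d for all x ∈ M*(σ). -/

import Mathlib

/-!
In inequality form `σ = {x ≥ 0 | x₁/2 + x₂ + ⋯ + x_d ≤ 1}`, so `C(σ)` is the simplicial cone cut
out by the coordinate forms `y₁, …, y_d` and the slack form `2 y_{d+1} + y₁ - 2 (y₁ + ⋯ + y_d)`.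
The cone is full-dimensional and the forms are nonzero, so `Int C(σ)` is given by the strict
inequalities; on lattice points a strict inequality means `≥ 1`, and `(1,…,1,d)` takes the value
`1` on every one of the forms. Hence `y ∈ M*(σ)` iff `y - (1,…,1,d)` is a lattice point of
`C(σ)`. Finally `σ` is normal: from a lattice point of `C(σ)` of degree `t ≥ 1` one can subtract
a lattice point of `σ × {1}` (`e_i` with `i ≥ 2`, `2e₁`, or `y₁e₁`) and stay in the cone, so by
induction on the degree the lattice points of `C(σ)` are exactly `M(σ)`. Since `deg w ≥ 0` on
`C(σ)`, the least degree of an element of `M*(σ)` below `y = (1,…,1,d) + w` is `d`.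
-/

open Set

noncomputable section

/-- Lift a point of `ℝ^m` to height 1 in `ℝ^(m+1)`. -/
def lift {m : ℕ} (x : Fin m → ℝ) : Fin (m + 1) → ℝ := Fin.snoc x 1

/-- A point with integer coordinates (a lattice point). -/
def isLat {n : ℕ} (x : Fin n → ℝ) : Prop := ∀ i, ∃ z : ℤ, x i = (z : ℝ)

/-- The cone `C(P)` generated by `P × {1}` (for convex `P`). -/
def coneOf {m : ℕ} (P : Set (Fin m → ℝ)) : Set (Fin (m + 1) → ℝ) :=
  {y | ∃ (c : ℝ) (p : Fin m → ℝ), 0 ≤ c ∧ p ∈ P ∧ y = c • lift p}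

/-- The semigroup `M(P)` generated by the lattice points of `P × {1}`. -/
def Msemi {m : ℕ} (P : Set (Fin m → ℝ)) : AddSubmonoid (Fin (m + 1) → ℝ) :=
  AddSubmonoid.closure {y | ∃ p ∈ P, isLat p ∧ y = lift p}

/-- `M*(P)`: the lattice points in the relative interior of `C(P)`. -/
def Mstar {m : ℕ} (P : Set (Fin m → ℝ)) : Set (Fin (m + 1) → ℝ) :=
  {y | y ∈ intrinsicInterior ℝ (coneOf P) ∧ isLat y}

/-- The degree: the last coordinate. -/
def deg {m : ℕ} (y : Fin (m + 1) → ℝ) : ℝ := y (Fin.last m)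

/-- The reduced `P`-degree of `y`. -/
def rdeg {m : ℕ} (P : Set (Fin m → ℝ)) (y : Fin (m + 1) → ℝ) : ℝ :=
  sInf {r | ∃ z w, z ∈ Mstar P ∧ w ∈ Msemi P ∧ y = z + w ∧ r = deg z}

/-- An empty lattice simplex: its only lattice points are its vertices. -/
def IsEmptyLatticeSimplex {m : ℕ} (s : Set (Fin m → ℝ)) : Prop :=
  ∃ (k : ℕ) (x : Fin (k + 1) → (Fin m → ℝ)), AffineIndependent ℝ x ∧
    (∀ i, isLat (x i)) ∧ s = convexHull ℝ (Set.range x) ∧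
    (∀ p ∈ s, isLat p → p ∈ Set.range x)

/-- A lattice triangulation of `P`: a finite face-closed family of empty lattice
simplices covering `P`, with pairwise disjoint relative interiors (every point of `P`
lies in the relative interior of exactly one simplex), and using every lattice point
of `P` as a vertex. -/
structure IsLatticeTriangulation {m : ℕ} (P : Set (Fin m → ℝ))
    (T : Set (Set (Fin m → ℝ))) : Prop where
  finite : T.Finite
  simplex : ∀ s ∈ T, IsEmptyLatticeSimplex s
  subset : ∀ s ∈ T, s ⊆ P
  partition : ∀ p ∈ P, ∃! s, s ∈ T ∧ p ∈ intrinsicInterior ℝ s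
  vertex : ∀ p ∈ P, isLat p → {p} ∈ T

theorem intrinsicInterior_eq_interior_of_affineSpan_eq_top {𝕜 V P : Type*} [Ring 𝕜]
    [AddCommGroup V] [Module 𝕜 V] [TopologicalSpace P] [AddTorsor V P] {s : Set P}
    (h : affineSpan 𝕜 s = ⊤) : intrinsicInterior 𝕜 s = interior s := by
  refine (interior_subset_intrinsicInterior).antisymm' fun x hx => ?_
  obtain ⟨y, hy, rfl⟩ := mem_intrinsicInterior.1 hx
  rw [mem_interior_iff_mem_nhds, mem_nhds_subtype] at hy
  rw [mem_interior_iff_mem_nhds]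
  obtain ⟨t, ht, hts⟩ := hy
  exact Filter.mem_of_superset ht fun v hv =>
    hts (show (⟨v, h ▸ AffineSubspace.mem_top 𝕜 V v⟩ : affineSpan 𝕜 s) ∈ (↑) ⁻¹' t from hv)

theorem interior_setOf_nonneg {X : Type*} [TopologicalSpace X] {f : X → ℝ}
    (hf : Continuous f) (hf' : IsOpenMap f) : interior {x | 0 ≤ f x} = {x | 0 < f x} := by
  have h := hf'.preimage_interior_eq_interior_preimage hf (Ici 0)
  rw [interior_Ici] at h
  exact h.symm

theorem pos_iff_one_le_of_eq_intCast {r : ℝ} {z : ℤ} (h : r = z) : 0 < r ↔ 1 ≤ r := by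
  rw [h, Int.cast_pos, ← Int.cast_one, Int.cast_le]
  omega

theorem isLat_add {n : ℕ} {x y : Fin n → ℝ} (hx : isLat x) (hy : isLat y) : isLat (x + y) :=
  fun i => by
    obtain ⟨a, ha⟩ := hx i
    obtain ⟨b, hb⟩ := hy i
    exact ⟨a + b, by simp [ha, hb]⟩

theorem isLat_sub {n : ℕ} {x y : Fin n → ℝ} (hx : isLat x) (hy : isLat y) : isLat (x - y) :=
  fun i => by
    obtain ⟨a, ha⟩ := hx i
    obtain ⟨b, hb⟩ := hy i
    exact ⟨a - b, by simp [ha, hb]⟩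

@[simp] theorem lift_castSucc {m : ℕ} (x : Fin m → ℝ) (i : Fin m) : lift x i.castSucc = x i := by
  simp [lift]

@[simp] theorem lift_last {m : ℕ} (x : Fin m → ℝ) : lift x (Fin.last m) = 1 := by
  simp [lift]

@[simp] theorem lift_zero {m : ℕ} [NeZero m] (x : Fin m → ℝ) : lift x 0 = x 0 := by
  simpa using lift_castSucc x 0

theorem isLat_lift {m : ℕ} {x : Fin m → ℝ} (hx : isLat x) : isLat (lift x) :=
  Fin.lastCases ⟨1, by simp⟩ fun i => by simpa using hx i

theorem lift_smul_init {m : ℕ} {y : Fin (m + 1) → ℝ} {c : ℝ} (hc : c * y (Fin.last m) = 1) :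
    lift (c • Fin.init y) = c • y := by
  funext j
  induction j using Fin.lastCases with
  | last => simpa using hc.symm
  | cast i => simp [Fin.init]

namespace StretchedSimplex

variable {d : ℕ} [NeZero d]

def vertex (d : ℕ) : Fin (d + 1) → Fin d → ℝ := fun k i =>
  if (k : ℕ) = 0 then (0 : ℝ)
  else if (k : ℕ) = 1 ∧ (i : ℕ) = 0 then 2
  else if (i : ℕ) + 1 = (k : ℕ) then 1 else 0

def simplex (d : ℕ) [NeZero d] : Set (Fin d → ℝ) :=
  {x | (∀ i, 0 ≤ x i) ∧ 2 * ∑ i, x i ≤ 2 + x 0}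

def slack (d : ℕ) [NeZero d] : StrongDual ℝ (Fin (d + 1) → ℝ) :=
  2 • ContinuousLinearMap.proj (Fin.last d) + ContinuousLinearMap.proj (Fin.castSucc 0)
    - 2 • ∑ i : Fin d, ContinuousLinearMap.proj i.castSucc

@[simp] theorem slack_apply (y : Fin (d + 1) → ℝ) :
    slack d y = 2 * y (Fin.last d) + y (Fin.castSucc 0) - 2 * ∑ i : Fin d, y i.castSucc := by
  simp [slack]

def cone (d : ℕ) [NeZero d] : Set (Fin (d + 1) → ℝ) :=
  {y | (∀ i : Fin d, 0 ≤ y i.castSucc) ∧ 0 ≤ slack d y}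

theorem lift_mem_cone_iff {x : Fin d → ℝ} : lift x ∈ cone d ↔ x ∈ simplex d := by
  simp [cone, simplex]

theorem add_mem_cone {y z : Fin (d + 1) → ℝ} (hy : y ∈ cone d) (hz : z ∈ cone d) :
    y + z ∈ cone d :=
  ⟨fun i => add_nonneg (hy.1 i) (hz.1 i), by rw [map_add]; exact add_nonneg hy.2 hz.2⟩

theorem smul_mem_cone {c : ℝ} (hc : 0 ≤ c) {y : Fin (d + 1) → ℝ} (hy : y ∈ cone d) :
    c • y ∈ cone d :=
  ⟨fun i => mul_nonneg hc (hy.1 i), by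
    rw [map_smul, smul_eq_mul]; exact mul_nonneg hc hy.2⟩

theorem sum_le_two_mul_last_of_mem_cone {y : Fin (d + 1) → ℝ} (hy : y ∈ cone d) :
    ∑ i : Fin d, y i.castSucc ≤ 2 * y (Fin.last d) := by
  have h₀ : y (Fin.castSucc 0) ≤ ∑ i : Fin d, y i.castSucc :=
    Finset.single_le_sum (fun i _ => hy.1 i) (Finset.mem_univ 0)
  have := hy.2
  rw [slack_apply] at this
  linarith

theorem last_nonneg_of_mem_cone {y : Fin (d + 1) → ℝ} (hy : y ∈ cone d) :
    0 ≤ y (Fin.last d) := by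
  have := sum_le_two_mul_last_of_mem_cone hy
  have := Finset.sum_nonneg fun i (_ : i ∈ Finset.univ) => hy.1 i
  linarith

theorem eq_zero_of_mem_cone_of_last_eq_zero {y : Fin (d + 1) → ℝ} (hy : y ∈ cone d)
    (hlast : y (Fin.last d) = 0) : y = 0 := by
  have hsum : ∑ i : Fin d, y i.castSucc = 0 :=
    le_antisymm (by simpa [hlast] using sum_le_two_mul_last_of_mem_cone hy)
      (Finset.sum_nonneg fun i _ => hy.1 i)
  rw [Finset.sum_eq_zero_iff_of_nonneg fun i _ => hy.1 i] at hsum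
  funext j
  induction j using Fin.lastCases with
  | last => exact hlast
  | cast i => exact hsum i (Finset.mem_univ i)

theorem coneOf_simplex : coneOf (simplex d) = cone d := by
  ext y
  constructor
  · rintro ⟨c, p, hc, hp, rfl⟩
    exact smul_mem_cone hc (lift_mem_cone_iff.2 hp)
  · intro hy
    obtain hlast | hlast := (last_nonneg_of_mem_cone hy).eq_or_lt
    · refine ⟨0, 0, le_rfl, ⟨fun _ => le_rfl, by simp⟩, ?_⟩
      simp [eq_zero_of_mem_cone_of_last_eq_zero hy hlast.symm]
    · have hlift := lift_smul_init (inv_mul_cancel₀ hlast.ne')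
      refine ⟨y (Fin.last d), (y (Fin.last d))⁻¹ • Fin.init y, hlast.le, lift_mem_cone_iff.1 ?_, ?_⟩
      · exact hlift ▸ smul_mem_cone (inv_nonneg.2 hlast.le) hy
      · rw [hlift, smul_inv_smul₀ hlast.ne']

omit [NeZero d] in
@[simp] theorem vertex_zero : vertex d 0 = 0 := by
  funext i; simp [vertex]

theorem vertex_succ (k : Fin d) : vertex d k.succ = Pi.single k (if k = 0 then 2 else 1) := by
  funext i
  simp only [vertex, Fin.val_succ, Pi.single_apply, Fin.ext_iff, Fin.val_zero]
  split_ifs <;> first | rfl | (exfalso; omega)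

theorem convex_simplex : Convex ℝ (simplex d) := by
  intro x hx y hy a b ha hb hab
  refine ⟨fun i => add_nonneg (mul_nonneg ha (hx.1 i)) (mul_nonneg hb (hy.1 i)), ?_⟩
  simp only [Pi.add_apply, Pi.smul_apply, smul_eq_mul, Finset.sum_add_distrib, ← Finset.mul_sum]
  have := mul_le_mul_of_nonneg_left hx.2 ha
  have := mul_le_mul_of_nonneg_left hy.2 hb
  linarith

theorem vertex_mem_simplex (k : Fin (d + 1)) : vertex d k ∈ simplex d := by
  refine Fin.cases ⟨fun _ => le_rfl, by simp⟩ (fun k => ?_) k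
  rw [vertex_succ]
  refine ⟨fun i => ?_, ?_⟩
  · rw [Pi.single_apply]; split_ifs <;> norm_num
  · rw [Finset.sum_pi_single']
    rcases eq_or_ne k 0 with rfl | hk
    · norm_num
    · simp [hk]

theorem convexHull_range_vertex : convexHull ℝ (range (vertex d)) = simplex d := by
  refine (convexHull_min (range_subset_iff.2 vertex_mem_simplex) convex_simplex).antisymm
    fun x hx => ?_
  have hs : ∀ k : Fin d, (if k = 0 then 2 else 1 : ℝ) ≠ 0 := fun k => by split_ifs <;> norm_num
  -- barycentric coordinates of `x` with respect to `vertex d`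
  set c : Fin (d + 1) → ℝ :=
    Fin.cons ((2 + x 0 - 2 * ∑ i, x i) / 2) fun k => x k / if k = 0 then 2 else 1
  have hc_nonneg : ∀ k ∈ Finset.univ, 0 ≤ c k := fun k _ =>
    Fin.cases (by simp only [c, Fin.cons_zero]; linarith [hx.2])
      (fun k => div_nonneg (hx.1 k) (by positivity)) k
  have hc_sum : ∑ k, c k = 1 := by
    have : ∀ k, (x k / if k = 0 then 2 else 1) = x k - if k = 0 then x 0 / 2 else 0 := fun k => by
      rcases eq_or_ne k 0 with rfl | hk
      · simp; ring
      · simp [hk]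
    simp only [c, Fin.sum_univ_succ, Fin.cons_zero, Fin.cons_succ, this, Finset.sum_sub_distrib,
      Finset.sum_ite_eq', Finset.mem_univ, if_true]
    ring
  have hc_comb : ∑ k, c k • vertex d k = x := by
    simp only [c, Fin.sum_univ_succ, Fin.cons_zero, Fin.cons_succ, vertex_zero, smul_zero,
      zero_add, vertex_succ, ← Pi.single_smul, smul_eq_mul, div_mul_cancel₀ _ (hs _)]
    exact Finset.univ_sum_single x
  rw [← hc_comb]
  exact (convex_convexHull ℝ _).sum_mem hc_nonneg hc_sum
    fun k _ => subset_convexHull ℝ _ (mem_range_self k)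

def apex (d : ℕ) : Fin (d + 1) → ℝ := fun k => if (k : ℕ) = d then (d : ℝ) else 1

omit [NeZero d] in
@[simp] theorem apex_castSucc (i : Fin d) : apex d i.castSucc = 1 :=
  if_neg i.isLt.ne

omit [NeZero d] in
@[simp] theorem apex_last : apex d (Fin.last d) = d :=
  if_pos rfl

omit [NeZero d] in
theorem isLat_apex : isLat (apex d) :=
  Fin.lastCases ⟨d, by simp⟩ fun i => ⟨1, by simp⟩

@[simp] theorem apex_zero : apex d 0 = 1 :=
  if_neg (NeZero.ne d).symm

@[simp] theorem slack_apex : slack d (apex d) = 1 := by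
  simp

theorem interior_cone :
    interior (cone d) = {y | (∀ i : Fin d, 0 < y i.castSucc) ∧ 0 < slack d y} := by
  have hslack : slack d ≠ 0 := fun h => by simpa [h] using slack_apex (d := d)
  have : cone d = (⋂ i : Fin d, {y | 0 ≤ y i.castSucc}) ∩ {y | 0 ≤ slack d y} := by
    ext; simp [cone]
  rw [this, interior_inter, interior_iInter_of_finite,
    interior_setOf_nonneg (slack d).continuous ((slack d).isOpenMap_of_ne_zero hslack)]
  have hcoord (i : Fin d) :
      interior {y : Fin (d + 1) → ℝ | 0 ≤ y i.castSucc} = {y | 0 < y i.castSucc} :=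
    interior_setOf_nonneg (continuous_apply _) (isOpenMap_eval _)
  ext; simp [hcoord]

theorem apex_mem_interior_cone : apex d ∈ interior (cone d) := by
  rw [interior_cone]
  exact ⟨fun i => by simp, by simp⟩

theorem intrinsicInterior_coneOf_simplex :
    intrinsicInterior ℝ (coneOf (simplex d)) = interior (cone d) := by
  rw [coneOf_simplex]
  exact intrinsicInterior_eq_interior_of_affineSpan_eq_top <|
    affineSpan_eq_top_of_nonempty_interior
      ⟨apex d, interior_mono (subset_convexHull ℝ _) apex_mem_interior_cone⟩

theorem exists_slack_eq_intCast {y : Fin (d + 1) → ℝ} (hy : isLat y) :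
    ∃ z : ℤ, slack d y = z := by
  choose z hz using hy
  exact ⟨2 * z (Fin.last d) + z (Fin.castSucc 0) - 2 * ∑ i : Fin d, z i.castSucc, by
    simp [hz]⟩

theorem mem_Mstar_simplex_iff {y : Fin (d + 1) → ℝ} :
    y ∈ Mstar (simplex d) ↔ y - apex d ∈ cone d ∧ isLat y := by
  simp only [Mstar, intrinsicInterior_coneOf_simplex, interior_cone, mem_ofPred_eq]
  simp only [cone, mem_ofPred_eq, Pi.sub_apply, apex_castSucc, map_sub, slack_apex, sub_nonneg]
  refine and_congr_left fun hy => and_congr (forall_congr' fun i => ?_) ?_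
  · obtain ⟨z, hz⟩ := hy i.castSucc
    exact pos_iff_one_le_of_eq_intCast hz
  · obtain ⟨z, hz⟩ := exists_slack_eq_intCast hy
    exact pos_iff_one_le_of_eq_intCast hz

theorem isLat_single {m : ℕ} (i : Fin m) (z : ℤ) : isLat (Pi.single i (z : ℝ)) := fun j =>
  ⟨(Pi.single i z : Fin m → ℤ) j, by rw [Pi.single_apply, Pi.single_apply]; split_ifs <;> simp⟩

theorem slack_lift_single (i : Fin d) (c : ℝ) :
    slack d (lift (Pi.single i c)) = 2 + (Pi.single i c : Fin d → ℝ) 0 - 2 * c := by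
  simp [Finset.sum_pi_single']

theorem exists_sub_lift_mem_cone_of_single {y : Fin (d + 1) → ℝ} (hy : y ∈ cone d) (i : Fin d)
    (z : ℤ) (hz : 0 ≤ z) (hzy : z ≤ y i.castSucc)
    (hslack : 0 ≤ slack d (lift (Pi.single i (z : ℝ))))
    (hslack_le : slack d (lift (Pi.single i (z : ℝ))) ≤ slack d y) :
    ∃ p ∈ simplex d, isLat p ∧ y - lift p ∈ cone d := by
  refine ⟨Pi.single i (z : ℝ), lift_mem_cone_iff.1 ⟨fun j => ?_, hslack⟩, isLat_single i z,
    fun j => ?_, by rw [map_sub]; linarith⟩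
  · rw [lift_castSucc, Pi.single_apply]; split_ifs <;> simp [hz]
  · rw [Pi.sub_apply, lift_castSucc, Pi.single_apply, sub_nonneg]
    split_ifs with hj
    · exact hj ▸ hzy
    · exact hy.1 j

theorem exists_sub_lift_mem_cone {y : Fin (d + 1) → ℝ} (hy : y ∈ cone d) (hlat : isLat y)
    (hlast : 1 ≤ y (Fin.last d)) : ∃ p ∈ simplex d, isLat p ∧ y - lift p ∈ cone d := by
  have hslack := hy.2
  by_cases hA : ∃ i : Fin d, i ≠ 0 ∧ 1 ≤ y i.castSucc
  · obtain ⟨i, hi, hyi⟩ := hA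
    have h : slack d (lift (Pi.single i ((1 : ℤ) : ℝ))) = 0 := by
      rw [slack_lift_single, Pi.single_eq_of_ne hi.symm]; norm_num
    exact exists_sub_lift_mem_cone_of_single hy i 1 zero_le_one (by simpa using hyi)
      h.ge (h ▸ hslack)
  by_cases hB : 2 ≤ y 0
  · have h : slack d (lift (Pi.single 0 ((2 : ℤ) : ℝ))) = 0 := by
      rw [slack_lift_single, Pi.single_eq_same]; norm_num
    exact exists_sub_lift_mem_cone_of_single hy 0 2 zero_le_two (by simpa using hB)
      h.ge (h ▸ hslack)
  simp only [not_exists, not_and, not_le] at hA hB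
  have hzero : ∀ i : Fin d, i ≠ 0 → y i.castSucc = 0 := fun i hi => by
    obtain ⟨z, hz⟩ := hlat i.castSucc
    have h₀ := hy.1 i
    have h₁ := hA i hi
    rw [hz] at h₀ h₁ ⊢
    have : z = 0 := by
      have : 0 ≤ z := by exact_mod_cast h₀
      have : z < 1 := by exact_mod_cast h₁
      omega
    simp [this]
  have hsum : ∑ i : Fin d, y i.castSucc = y 0 := by
    simpa using Finset.sum_eq_single (0 : Fin d) (fun i _ hi => hzero i hi) (by simp)
  obtain ⟨z, hz⟩ := hlat 0
  have hz0 : 0 ≤ z := by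
    have := hy.1 0
    rw [Fin.castSucc_zero, hz] at this
    exact_mod_cast this
  refine exists_sub_lift_mem_cone_of_single hy 0 z hz0 (by simp [hz]) ?_ ?_ <;>
    rw [slack_lift_single, Pi.single_eq_same, ← hz]
  · linarith
  · rw [slack_apply, hsum, Fin.castSucc_zero]
    linarith

theorem mem_Msemi_of_mem_cone {y : Fin (d + 1) → ℝ} (hy : y ∈ cone d) (hlat : isLat y) :
    y ∈ Msemi (simplex d) := by
  obtain ⟨t, ht⟩ := hlat (Fin.last d)
  lift t to ℕ using (by exact_mod_cast ht ▸ last_nonneg_of_mem_cone hy)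
  induction t generalizing y with
  | zero =>
    rw [eq_zero_of_mem_cone_of_last_eq_zero hy (by simpa using ht)]
    exact zero_mem _
  | succ n ih =>
    obtain ⟨p, hp, hplat, hsub⟩ := exists_sub_lift_mem_cone hy hlat (by simp [ht])
    have := ih hsub (isLat_sub hlat (isLat_lift hplat)) (by simp [ht])
    have hgen : lift p ∈ Msemi (simplex d) := AddSubmonoid.subset_closure ⟨p, hp, hplat, rfl⟩
    simpa using add_mem hgen this

theorem mem_Msemi_simplex_iff {y : Fin (d + 1) → ℝ} :
    y ∈ Msemi (simplex d) ↔ y ∈ cone d ∧ isLat y := by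
  refine ⟨fun hy => ?_, fun hy => mem_Msemi_of_mem_cone hy.1 hy.2⟩
  induction hy using AddSubmonoid.closure_induction with
  | mem _ h =>
    obtain ⟨p, hp, hplat, rfl⟩ := h
    exact ⟨lift_mem_cone_iff.2 hp, isLat_lift hplat⟩
  | zero => refine ⟨⟨fun _ => le_rfl, ?_⟩, fun _ => ⟨0, ?_⟩⟩ <;> simp
  | add _ _ _ _ hy hz => exact ⟨add_mem_cone hy.1 hz.1, isLat_add hy.2 hz.2⟩

theorem mem_Mstar_simplex_iff_exists {y : Fin (d + 1) → ℝ} :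
    y ∈ Mstar (simplex d) ↔ ∃ w ∈ Msemi (simplex d), y = apex d + w := by
  rw [mem_Mstar_simplex_iff]
  constructor
  · rintro ⟨hcone, hlat⟩
    exact ⟨y - apex d, mem_Msemi_simplex_iff.2 ⟨hcone, isLat_sub hlat isLat_apex⟩, by abel⟩
  · rintro ⟨w, hw, rfl⟩
    obtain ⟨hcone, hlat⟩ := mem_Msemi_simplex_iff.1 hw
    exact ⟨by simpa using hcone, isLat_add isLat_apex hlat⟩

theorem rdeg_simplex {y : Fin (d + 1) → ℝ} (hy : y ∈ Mstar (simplex d)) :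
    rdeg (simplex d) y = d := by
  refine IsLeast.csInf_eq ⟨?_, ?_⟩
  · obtain ⟨w, hw, rfl⟩ := mem_Mstar_simplex_iff_exists.1 hy
    exact ⟨apex d, w, mem_Mstar_simplex_iff_exists.2 ⟨0, zero_mem _, (add_zero _).symm⟩, hw, rfl,
      apex_last.symm⟩
  · rintro _ ⟨z, w, hz, -, -, rfl⟩
    obtain ⟨u, hu, rfl⟩ := mem_Mstar_simplex_iff_exists.1 hz
    have := last_nonneg_of_mem_cone (mem_Msemi_simplex_iff.1 hu).1
    simpa [deg] using this

end StretchedSimplex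

/-- for the simplex with vertices `0, 2e₁, e₂, …, e_d` in `ℝ^d`,
`M*(σ) = (1,…,1,d) + M(σ)`, and consequently `rdeg x = d` for all `x ∈ M*(σ)`. -/
theorem stmt13 {d : ℕ} (hd : 1 ≤ d) (σ : Set (Fin d → ℝ))
    (hσ : σ = convexHull ℝ (Set.range (fun k : Fin (d + 1) => fun i : Fin d =>
      if (k : ℕ) = 0 then (0 : ℝ)
      else if (k : ℕ) = 1 ∧ (i : ℕ) = 0 then 2
      else if (i : ℕ) + 1 = (k : ℕ) then 1 else 0))) :
    (∀ y, y ∈ Mstar σ ↔ ∃ w ∈ Msemi σ,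
        y = (fun k : Fin (d + 1) => if (k : ℕ) = d then (d : ℝ) else 1) + w) ∧
    ∀ y ∈ Mstar σ, rdeg σ y = d := by
  have : NeZero d := ⟨by omega⟩
  obtain rfl : σ = StretchedSimplex.simplex d :=
    hσ.trans StretchedSimplex.convexHull_range_vertex
  exact ⟨fun _ => StretchedSimplex.mem_Mstar_simplex_iff_exists,
    fun _ => StretchedSimplex.rdeg_simplex⟩
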